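/- Let K be a field, q ∈ K an invertible element with q² ≠ 1, p ≥ 2, and let μ_1, …, μ_p ∈ K be pairwise distinct. Define z_n = n_q · q^{1−n} − n for n ≥ 0 (with the integer n regarded as an element of K), and set η_1 = 0 and η_k = z_k · e_k(μ̂_1) + z_{k−1} · μ_1 · e_{k−1}(μ̂_1) for 2 ≤ k ≤ p. Then the p×p matrix whose first column is (η_1, …, η_p)ᵗ and whose j-th column (for 2 ≤ j ≤ p) is (e_0(μ̂_j), e_1(μ̂_j), …, e_{p−1}(μ̂_j))ᵗ has determinant 0. -/

import Mathlib

/-- The q-number `n_q = (q^n - q^{-n})/(q - q⁻¹)`. -/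
noncomputable def qnum {K : Type*} [Field K] (q : K) (n : ℤ) : K :=
  (q ^ n - q ^ (-n)) / (q - q⁻¹)

/-- Elementary symmetric function of the family `t` restricted to the index set `s`. -/
def esymmOn {R : Type*} [CommRing R] {ι : Type*} (s : Finset ι) (t : ι → R) (k : ℕ) : R :=
  ∑ A ∈ Finset.powersetCard k s, ∏ i ∈ A, t i

lemma esymmOn_zero {R : Type*} [CommRing R] {ι : Type*} (s : Finset ι) (t : ι → R) :
    esymmOn s t 0 = 1 := by simp [esymmOn]

lemma esymmOn_of_card_lt {R : Type*} [CommRing R] {ι : Type*} {s : Finset ι} (t : ι → R)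
    {k : ℕ} (h : s.card < k) : esymmOn s t k = 0 := by
  simp [esymmOn, Finset.powersetCard_eq_empty.2 h]

lemma esymmOn_insert {R : Type*} [CommRing R] {ι : Type*} [DecidableEq ι] {x : ι}
    {s : Finset ι} (h : x ∉ s) (t : ι → R) (k : ℕ) :
    esymmOn (insert x s) t (k + 1) = esymmOn s t (k + 1) + t x * esymmOn s t k := by
  unfold esymmOn
  rw [Finset.powersetCard_succ_insert h, Finset.sum_union, Finset.sum_image, Finset.mul_sum]
  · congr 1
    refine Finset.sum_congr rfl fun A hA => ?_
    rw [Finset.mem_powersetCard] at hA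
    rw [Finset.prod_insert fun hx => h (hA.1 hx)]
  · intro A hA B hB hAB
    rw [Finset.mem_coe, Finset.mem_powersetCard] at hA hB
    have hxA : x ∉ A := fun hx => h (hA.1 hx)
    have hxB : x ∉ B := fun hx => h (hB.1 hx)
    have := congrArg (Finset.erase · x) hAB
    simpa [Finset.erase_insert hxA, Finset.erase_insert hxB] using this
  · rw [Finset.disjoint_left]
    intro A hA hA'
    rw [Finset.mem_powersetCard] at hA
    obtain ⟨B, hB, rfl⟩ := Finset.mem_image.1 hA'
    exact h (hA.1 (Finset.mem_insert_self x B))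

lemma alt_sum_esymmOn_eq_zero {K : Type*} [CommRing K] {ι : Type*} [DecidableEq ι]
    {s : Finset ι} {a : ι} (ha : a ∈ s) (t : ι → K) :
    ∑ k ∈ Finset.range (s.card + 1), (-1 : K) ^ k * (t a) ^ (s.card - k) * esymmOn s t k
      = 0 := by
  obtain ⟨s', ha', rfl⟩ : ∃ s', a ∉ s' ∧ s = insert a s' :=
    ⟨s.erase a, Finset.notMem_erase a s, (Finset.insert_erase ha).symm⟩
  rw [Finset.card_insert_of_notMem ha']
  set m := s'.card with hm
  set y := t a with hy
  rw [Finset.sum_range_succ']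
  have hstep : ∀ k ∈ Finset.range (m + 1),
      (-1 : K) ^ (k + 1) * y ^ (m + 1 - (k + 1)) * esymmOn (insert a s') t (k + 1)
        = ((-1 : K) ^ (k + 1) * y ^ (m + 1 - (k + 1)) * esymmOn s' t (k + 1))
          - ((-1 : K) ^ k * y ^ (m + 1 - k) * esymmOn s' t k) := by
    intro k hk
    rw [Finset.mem_range] at hk
    rw [esymmOn_insert ha', show m + 1 - (k + 1) = m - k from by omega,
      show m + 1 - k = (m - k) + 1 from by omega]
    ring
  rw [Finset.sum_congr rfl hstep, Finset.sum_range_sub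
    (fun k => (-1 : K) ^ k * y ^ (m + 1 - k) * esymmOn s' t k)]
  rw [esymmOn_of_card_lt t (by omega : s'.card < m + 1), esymmOn_zero, esymmOn_zero]
  simp

/-- the determinant `Δ₁''(μ)` vanishes.  Here `z_n = n_q q^{1−n} − n`,
`η_1 = 0`, `η_k = z_k e_k(μ̂_1) + z_{k−1} μ_1 e_{k−1}(μ̂_1)` for `2 ≤ k ≤ p`, and the
`p×p` matrix has first column `(η_1,…,η_p)ᵗ` and `j`-th column
`(e_0(μ̂_j),…,e_{p−1}(μ̂_j))ᵗ` for `2 ≤ j ≤ p`. -/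
theorem det_eta_vanishes {K : Type*} [Field K] (q : K) (hq0 : q ≠ 0) (hq2 : q ^ 2 ≠ 1)
    {p : ℕ} (hp : 2 ≤ p) (μ : Fin p → K) (hμ : Function.Injective μ)
    (z : ℕ → K) (hz : ∀ n : ℕ, z n = qnum q n * q ^ (1 - (n : ℤ)) - (n : K))
    (η : ℕ → K) (hη1 : η 1 = 0)
    (hη : ∀ k : ℕ, 2 ≤ k → k ≤ p →
      η k = z k * esymmOn (Finset.univ.erase (⟨0, by omega⟩ : Fin p)) μ k
        + z (k - 1) * μ ⟨0, by omega⟩ *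
            esymmOn (Finset.univ.erase (⟨0, by omega⟩ : Fin p)) μ (k - 1)) :
    (Matrix.of fun k j : Fin p =>
        if j.val = 0 then η (k.val + 1)
        else esymmOn (Finset.univ.erase j) μ k.val).det = 0 := by
  have hqq : q - q⁻¹ ≠ 0 := by
    intro h
    apply hq2
    have : q = q⁻¹ := sub_eq_zero.1 h
    calc q ^ 2 = q * q := sq q
    _ = q * q⁻¹ := by rw [← this]
    _ = 1 := mul_inv_cancel₀ hq0
  have hz0 : z 0 = 0 := by simp [hz 0, qnum]
  have hz1 : z 1 = 0 := by
    rw [hz 1]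
    simp [qnum, div_self hqq]
  set i0 : Fin p := ⟨0, by omega⟩ with hi0
  set e : ℕ → K := fun k => esymmOn (Finset.univ.erase i0) μ k with he
  have hcard : (Finset.univ.erase i0).card = p - 1 := by
    rw [Finset.card_erase_of_mem (Finset.mem_univ i0), Finset.card_univ, Fintype.card_fin]
  rw [← Matrix.exists_vecMul_eq_zero_iff]
  refine ⟨fun k => (-1 : K) ^ (k : ℕ) * μ i0 ^ (p - 1 - (k : ℕ)), ?_, ?_⟩
  · intro h
    have := congrFun h ⟨p - 1, by omega⟩
    simp [Nat.sub_self] at this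
  · funext j
    simp only [Matrix.vecMul, dotProduct, Matrix.of_apply, Pi.zero_apply]
    by_cases hj : (j : ℕ) = 0
    · simp only [hj, if_pos]
      have hη' : ∀ k, k < p → η (k + 1) = z (k + 1) * e (k + 1) + z k * μ i0 * e k := by
        intro k hk
        rcases Nat.eq_zero_or_pos k with rfl | hk1
        · rw [hη1, hz1, hz0]; ring
        · have := hη (k + 1) (by omega) (by omega)
          simpa using this
      rw [Fin.sum_univ_eq_sum_range
        (fun k => (-1 : K) ^ k * μ i0 ^ (p - 1 - k) * η (k + 1))]
      have hstep : ∀ k ∈ Finset.range p,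
          (-1 : K) ^ k * μ i0 ^ (p - 1 - k) * η (k + 1)
            = ((-1 : K) ^ (k + 2) * μ i0 ^ (p - (k + 1)) * (z (k + 1) * e (k + 1)))
              - ((-1 : K) ^ (k + 1) * μ i0 ^ (p - k) * (z k * e k)) := by
        intro k hk
        rw [Finset.mem_range] at hk
        rw [hη' k hk, show p - (k + 1) = p - 1 - k from by omega,
          show p - k = (p - 1 - k) + 1 from by omega]
        ring
      rw [Finset.sum_congr rfl hstep, Finset.sum_range_sub
        (fun k => (-1 : K) ^ (k + 1) * μ i0 ^ (p - k) * (z k * e k))]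
      have hep : e p = 0 := esymmOn_of_card_lt μ (by rw [hcard]; omega)
      rw [hep, hz0]
      simp
    · simp only [hj, if_false]
      have hmem : i0 ∈ Finset.univ.erase j := by
        refine Finset.mem_erase.2 ⟨?_, Finset.mem_univ _⟩
        intro h; apply hj; rw [← h]
      have hcardj : (Finset.univ.erase j).card = p - 1 := by
        rw [Finset.card_erase_of_mem (Finset.mem_univ j), Finset.card_univ, Fintype.card_fin]
      have := alt_sum_esymmOn_eq_zero hmem μ
      rw [hcardj, show p - 1 + 1 = p from by omega] at this
      rw [Fin.sum_univ_eq_sum_range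
        (fun k => (-1 : K) ^ k * μ i0 ^ (p - 1 - k) * esymmOn (Finset.univ.erase j) μ k)]
      exact this
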